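/- arXiv:2209.02994 — 3 statements merged into one kernel-verified Lean document; each statement's English description precedes it below -/
import Mathlib

section
/- Define u₁(x) = 8/25 - 11x/25 - (8/25)e^{-5x/ε} + (3/25)e^{-5(1-x)/ε} and u₂(x) = 4/25 + 2x/25 - (4/25)e^{-5x/ε} - (6/25)e^{-5(1-x)/ε} for ε > 0. Then (u₁, u₂) satisfies exactly the system -ε u₁'' - 3u₁' - 4u₂' = 1 and -ε u₂'' - 4u₁' + 3u₂' = 2 on (0,1), and the boundary values satisfy |u₁(0)|, |u₂(0)|, |u₁(1)|, |u₂(1)| ≤ C e^{-5/ε} for a constant C independent of ε. -/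
/-!
With `κ = 5 / ε`, both components are boundary-layer profiles
`a + b x + p e^{-κx} + q e^{-κ(1-x)}`, a family closed under differentiation. The system reads
`-ε U'' - A U' = f` with `A = [[3, 4], [4, -3]]`: the linear part solves the reduced system
`-A U' = f`, and the amplitude vectors `(p₁, p₂) ∥ (2, 1)` and `(q₁, q₂) ∥ (1, -2)` are eigenvectors
of `A` for the eigenvalues `5` and `-5`, which makes each layer term annihilated by the operator.
At `x = 0` (resp. `x = 1`) the linear part cancels the near layer, so only the far layer,
of size `e^{-κ} = e^{-5/ε}`, survives.
-/

open Real

noncomputable def layerProfile (κ a b p q x : ℝ) : ℝ :=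
  a + b * x + p * exp (-κ * x) + q * exp (-κ * (1 - x))

theorem hasDerivAt_layerProfile (κ a b p q x : ℝ) :
    HasDerivAt (layerProfile κ a b p q) (layerProfile κ b 0 (-κ * p) (κ * q) x) x := by
  have hleft : HasDerivAt (fun x => exp (-κ * x)) (exp (-κ * x) * -κ) x := by
    simpa using ((hasDerivAt_id x).const_mul (-κ)).exp
  have hright : HasDerivAt (fun x => exp (-κ * (1 - x))) (exp (-κ * (1 - x)) * κ) x := by
    simpa using (((hasDerivAt_id x).const_sub 1).const_mul (-κ)).exp
  exact ((((hasDerivAt_id x).const_mul b).const_add a).add (hleft.const_mul p)).add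
    (hright.const_mul q) |>.congr_deriv (by simp only [layerProfile]; ring)

theorem deriv_layerProfile (κ a b p q : ℝ) :
    deriv (layerProfile κ a b p q) = layerProfile κ b 0 (-κ * p) (κ * q) :=
  funext fun x => (hasDerivAt_layerProfile κ a b p q x).deriv

theorem layerProfile_zero (κ a b p q : ℝ) :
    layerProfile κ a b p q 0 = a + p + q * exp (-κ) := by
  simp [layerProfile]

theorem layerProfile_one (κ a b p q : ℝ) :
    layerProfile κ a b p q 1 = a + b + q + p * exp (-κ) := by
  simp [layerProfile]
  ring

/-- The explicit asymptotic approximation of the strongly coupled system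
`-ε u₁'' - 3u₁' - 4u₂' = 1`, `-ε u₂'' - 4u₁' + 3u₂' = 2` solves the system
exactly on `(0,1)`, with boundary values of size `O(e^{-5/ε})` uniformly
in `ε`. -/
theorem strongly_coupled_asymptotic_solution :
    ∃ C : ℝ, ∀ ε : ℝ, 0 < ε → ∀ u₁ u₂ : ℝ → ℝ,
      (∀ x, u₁ x = 8 / 25 - 11 * x / 25 - (8 / 25) * Real.exp (-5 * x / ε)
          + (3 / 25) * Real.exp (-5 * (1 - x) / ε)) →
      (∀ x, u₂ x = 4 / 25 + 2 * x / 25 - (4 / 25) * Real.exp (-5 * x / ε)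
          - (6 / 25) * Real.exp (-5 * (1 - x) / ε)) →
      (∀ x ∈ Set.Ioo (0:ℝ) 1,
        -ε * deriv (deriv u₁) x - 3 * deriv u₁ x - 4 * deriv u₂ x = 1 ∧
        -ε * deriv (deriv u₂) x - 4 * deriv u₁ x + 3 * deriv u₂ x = 2) ∧
      |u₁ 0| ≤ C * Real.exp (-5 / ε) ∧ |u₂ 0| ≤ C * Real.exp (-5 / ε) ∧
      |u₁ 1| ≤ C * Real.exp (-5 / ε) ∧ |u₂ 1| ≤ C * Real.exp (-5 / ε) := by
  refine ⟨1, fun ε hε u₁ u₂ hu₁ hu₂ => ?_⟩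
  have hdiv (c y : ℝ) : -c * y / ε = -(c / ε) * y := by ring
  obtain rfl : u₁ = layerProfile (5 / ε) (8 / 25) (-11 / 25) (-8 / 25) (3 / 25) := by
    funext x
    rw [hu₁, hdiv, hdiv, layerProfile]
    ring
  obtain rfl : u₂ = layerProfile (5 / ε) (4 / 25) (2 / 25) (-4 / 25) (-6 / 25) := by
    funext x
    rw [hu₂, hdiv, hdiv, layerProfile]
    ring
  refine ⟨fun x _ => ?_, ?_, ?_, ?_, ?_⟩
  · simp only [deriv_layerProfile, layerProfile]
    constructor <;> field_simp <;> ring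
  all_goals
    simp only [layerProfile_zero, layerProfile_one, ← neg_div]
    norm_num
    exact mul_le_of_le_one_left (exp_pos _).le (by norm_num)
end

section
/- Let 0 < ε ≤ 1, β > 0, μ ≥ 1, N ≥ 4 even, and consider the Shishkin mesh on [0,1] with transition point σ = min{1/2, (με/β) ln N}, N/2 equal subintervals on each of [0,σ] and [σ,1]. Then for the layer function E(x) = e^{-βx/ε}, one has max_{1 ≤ k ≤ N} ∫_{x_{k-1}}^{x_k} (1 + ε^{-1} E(x)) dx ≤ C N^{-1} ln N for a constant C depending only on μ and β (not on ε or N). -/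
/-!
The integrand has the primitive `t - β⁻¹ e^{-βt/ε}`, so a mesh interval `[a, b]` contributes
`(b - a) + β⁻¹ (e^{-βa/ε} - e^{-βb/ε})`. Every mesh width is at most `2/N ≤ 2 N⁻¹ ln N`.
Since `e^{-t}` is `1`-Lipschitz on `[0, ∞)`, the layer term is at most `(b - a)/ε`, which is
at most `2μ ln N/(βN)` on intervals of width `2σ/N`: these are the fine intervals, and all
intervals when `σ = 1/2`. On the coarse intervals with `σ = (με/β) ln N` the layer term is
instead at most `β⁻¹ e^{-βσ/ε} = β⁻¹ N^{-μ} ≤ β⁻¹ N⁻¹`.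
-/

open Real intervalIntegral

lemma exp_neg_sub_exp_neg_le {u v : ℝ} (hu : 0 ≤ u) (huv : u ≤ v) :
    exp (-u) - exp (-v) ≤ v - u := by
  have htangent : exp (-u) * (1 + (u - v)) ≤ exp (-v) :=
    calc exp (-u) * (1 + (u - v)) ≤ exp (-u) * exp (u - v) := by
          gcongr; linarith [add_one_le_exp (u - v)]
      _ = exp (-v) := by rw [← exp_add]; congr 1; ring
  have hle_one : exp (-u) ≤ 1 := exp_le_one_iff.mpr (by linarith)
  nlinarith [exp_pos (-u)]

section Layer

variable {ε β : ℝ}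

theorem integral_one_add_inv_mul_exp (hε : ε ≠ 0) (hβ : β ≠ 0) (a b : ℝ) :
    ∫ t in a..b, (1 + ε⁻¹ * exp (-β * t / ε)) =
      (b - a) + β⁻¹ * (exp (-β * a / ε) - exp (-β * b / ε)) := by
  have hderiv : ∀ t, HasDerivAt (fun t => t - β⁻¹ * exp (-β * t / ε))
      (1 + ε⁻¹ * exp (-β * t / ε)) t := by
    intro t
    have hlin : HasDerivAt (fun t : ℝ => -β * t / ε) (-β / ε) t := by
      simpa using ((hasDerivAt_id t).const_mul (-β)).div_const ε
    refine ((hasDerivAt_id' t).sub (hlin.exp.const_mul β⁻¹)).congr_deriv ?_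
    field_simp
    ring
  rw [integral_eq_sub_of_hasDerivAt (fun t _ => hderiv t)
    ((by fun_prop : Continuous _).intervalIntegrable a b)]
  ring

lemma layer_term_le_of_sub_le (hε : 0 < ε) (hβ : 0 < β) {a b c : ℝ} (ha : 0 ≤ a)
    (hab : a ≤ b) (hw : b - a ≤ c * ε) :
    β⁻¹ * (exp (-β * a / ε) - exp (-β * b / ε)) ≤ c := by
  have hscaled := exp_neg_sub_exp_neg_le (u := β * a / ε) (v := β * b / ε) (by positivity)
    (by gcongr)
  calc β⁻¹ * (exp (-β * a / ε) - exp (-β * b / ε))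
      ≤ β⁻¹ * (β * b / ε - β * a / ε) := by
        simp only [neg_mul, neg_div] at hscaled ⊢; gcongr
    _ = (b - a) / ε := by field_simp
    _ ≤ c := (div_le_iff₀ hε).mpr hw

lemma layer_term_le_of_le (hε : 0 < ε) (hβ : 0 < β) {s a b : ℝ} (hsa : s ≤ a) :
    β⁻¹ * (exp (-β * a / ε) - exp (-β * b / ε)) ≤ β⁻¹ * exp (-β * s / ε) := by
  have : exp (-β * a / ε) ≤ exp (-β * s / ε) := by
    simp only [neg_mul, neg_div]
    gcongr
  have := exp_pos (-β * b / ε)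
  gcongr
  linarith

lemma exp_neg_mul_transition_le {μ n : ℝ} (hε : ε ≠ 0) (hβ : β ≠ 0) (hμ : 1 ≤ μ)
    (hn : 1 ≤ n) :
    exp (-β * (μ * ε / β * log n) / ε) ≤ n⁻¹ := by
  have hlog : 0 ≤ log n := log_nonneg hn
  calc exp (-β * (μ * ε / β * log n) / ε) = exp (-(μ * log n)) := by
        congr 1; field_simp
    _ ≤ exp (-log n) := by gcongr; nlinarith
    _ = n⁻¹ := by rw [exp_neg, exp_log (by linarith)]

end Layer

section ShishkinMesh

variable {μ β ε σ : ℝ} {N : ℕ} {x : ℕ → ℝ} {k : ℕ}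

lemma shishkin_sub_of_le_half (hfine : ∀ k ≤ N / 2, x k = 2 * σ * k / N) (hk1 : 1 ≤ k)
    (hk : k ≤ N / 2) : x k - x (k - 1) = 2 * σ / N := by
  rw [hfine k hk, hfine (k - 1) (by omega), Nat.cast_sub hk1]
  ring

lemma shishkin_sub_of_half_lt
    (hcoarse : ∀ k, N / 2 ≤ k → k ≤ N →
      x k = σ + 2 * (1 - σ) * ((k : ℝ) - (N : ℝ) / 2) / N)
    (hk : N / 2 < k) (hkN : k ≤ N) : x k - x (k - 1) = 2 * (1 - σ) / N := by
  rw [hcoarse k hk.le hkN, hcoarse (k - 1) (by omega) (by omega), Nat.cast_sub (by omega)]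
  ring

lemma le_shishkin_of_half_le
    (hcoarse : ∀ k, N / 2 ≤ k → k ≤ N →
      x k = σ + 2 * (1 - σ) * ((k : ℝ) - (N : ℝ) / 2) / N)
    (hN : Even N) (hσ : σ ≤ 1) (hk : N / 2 ≤ k) (hkN : k ≤ N) : σ ≤ x k := by
  have hhalf : (N : ℝ) / 2 ≤ k := by
    obtain ⟨m, rfl⟩ := hN
    have : (m : ℝ) ≤ k := by exact_mod_cast (by omega : m ≤ k)
    push_cast
    linarith
  have : 0 ≤ 2 * (1 - σ) * ((k : ℝ) - (N : ℝ) / 2) / N :=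
    div_nonneg (mul_nonneg (by linarith) (by linarith)) N.cast_nonneg
  rw [hcoarse k hk hkN]
  linarith

lemma shishkin_nonneg (hfine : ∀ k ≤ N / 2, x k = 2 * σ * k / N)
    (hcoarse : ∀ k, N / 2 ≤ k → k ≤ N →
      x k = σ + 2 * (1 - σ) * ((k : ℝ) - (N : ℝ) / 2) / N)
    (hN : Even N) (hσ0 : 0 ≤ σ) (hσ1 : σ ≤ 1) (hkN : k ≤ N) : 0 ≤ x k := by
  rcases le_total k (N / 2) with hk | hk
  · rw [hfine k hk]; positivity
  · exact hσ0.trans (le_shishkin_of_half_le hcoarse hN hσ1 hk hkN)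

lemma shishkin_sub_mem_Icc (hfine : ∀ k ≤ N / 2, x k = 2 * σ * k / N)
    (hcoarse : ∀ k, N / 2 ≤ k → k ≤ N →
      x k = σ + 2 * (1 - σ) * ((k : ℝ) - (N : ℝ) / 2) / N)
    (hσ0 : 0 ≤ σ) (hσ1 : σ ≤ 1) (hk1 : 1 ≤ k) (hkN : k ≤ N) :
    x k - x (k - 1) ∈ Set.Icc (0 : ℝ) (2 / N) := by
  rcases le_or_gt k (N / 2) with hk | hk
  · rw [shishkin_sub_of_le_half hfine hk1 hk]
    exact ⟨by positivity, by gcongr; linarith⟩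
  · rw [shishkin_sub_of_half_lt hcoarse hk hkN]
    exact ⟨div_nonneg (by linarith) N.cast_nonneg, by gcongr; linarith⟩

lemma shishkin_layer_term_le (hε : 0 < ε) (hβ : 0 < β) (hμ : 1 ≤ μ) (hlog : 1 ≤ log N)
    (hN : Even N) (hσ : σ = min (1 / 2) (μ * ε / β * log N))
    (hfine : ∀ k ≤ N / 2, x k = 2 * σ * k / N)
    (hcoarse : ∀ k, N / 2 ≤ k → k ≤ N →
      x k = σ + 2 * (1 - σ) * ((k : ℝ) - (N : ℝ) / 2) / N)
    (hk1 : 1 ≤ k) (hkN : k ≤ N) :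
    β⁻¹ * (exp (-β * x (k - 1) / ε) - exp (-β * x k / ε)) ≤
      2 * μ / β * ((N : ℝ)⁻¹ * log N) := by
  have hσ0 : 0 ≤ σ := hσ ▸ le_min (by norm_num) (by positivity)
  have hσ1 : σ ≤ 1 / 2 := hσ ▸ min_le_left _ _
  have ha : 0 ≤ x (k - 1) := shishkin_nonneg hfine hcoarse hN hσ0 (by linarith) (by omega)
  have hab : x (k - 1) ≤ x k := by
    linarith [(shishkin_sub_mem_Icc hfine hcoarse hσ0 (by linarith) hk1 hkN).1]
  have hfine_width : 2 * σ / N ≤ 2 * μ / β * ((N : ℝ)⁻¹ * log N) * ε :=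
    calc 2 * σ / N ≤ 2 * (μ * ε / β * log N) / N := by gcongr; exact hσ ▸ min_le_right _ _
      _ = 2 * μ / β * ((N : ℝ)⁻¹ * log N) * ε := by ring
  rcases le_or_gt k (N / 2) with hk | hk
  · exact layer_term_le_of_sub_le hε hβ ha hab
      ((shishkin_sub_of_le_half hfine hk1 hk).trans_le hfine_width)
  rcases le_total (1 / 2) (μ * ε / β * log N) with hmin | hmin
  · -- For `σ = 1/2` the mesh is uniform, so the fine-mesh width bound still applies.
    have hσ_half : σ = 1 / 2 := hσ.trans (min_eq_left hmin)
    refine layer_term_le_of_sub_le hε hβ ha hab (le_trans (le_of_eq ?_) hfine_width)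
    rw [shishkin_sub_of_half_lt hcoarse hk hkN, hσ_half]
    ring
  · have hσ_log : σ = μ * ε / β * log N := hσ.trans (min_eq_right hmin)
    calc β⁻¹ * (exp (-β * x (k - 1) / ε) - exp (-β * x k / ε))
        ≤ β⁻¹ * exp (-β * σ / ε) :=
          layer_term_le_of_le hε hβ
            (le_shishkin_of_half_le hcoarse hN (by linarith) (by omega) (by omega))
      _ ≤ β⁻¹ * ((N : ℝ)⁻¹ * log N) := by
          rw [hσ_log]
          gcongr
          have hN1 : (1 : ℝ) ≤ N := by exact_mod_cast (by omega : 1 ≤ N)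
          exact (exp_neg_mul_transition_le hε.ne' hβ.ne' hμ hN1).trans
            (le_mul_of_one_le_right (by positivity) hlog)
      _ ≤ 2 * μ / β * ((N : ℝ)⁻¹ * log N) := by
          gcongr
          rw [div_eq_mul_inv]
          nlinarith [inv_pos.mpr hβ]

end ShishkinMesh

/-- The key mesh-integral estimate on a Shishkin mesh: with transition point
`σ = min {1/2, (με/β) ln N}` and `N/2` equal subintervals on each of `[0,σ]`
and `[σ,1]`, the integral of `1 + ε⁻¹ e^{-βx/ε}` over any mesh interval is at
most `C N⁻¹ ln N`, with `C` depending only on `μ` and `β`. -/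
theorem shishkin_mesh_integral_estimate (μ β : ℝ) (hμ : 1 ≤ μ) (hβ : 0 < β) :
    ∃ C : ℝ, 0 < C ∧
      ∀ (ε : ℝ) (N : ℕ), 0 < ε → ε ≤ 1 → 4 ≤ N → Even N →
        ∀ (σ : ℝ) (x : ℕ → ℝ),
          σ = min (1 / 2) (μ * ε / β * Real.log N) →
          (∀ k ≤ N / 2, x k = 2 * σ * k / N) →
          (∀ k, N / 2 ≤ k → k ≤ N →
            x k = σ + 2 * (1 - σ) * ((k : ℝ) - (N : ℝ) / 2) / N) →
          ∀ k, 1 ≤ k → k ≤ N →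
            (∫ t in x (k - 1)..x k, (1 + ε⁻¹ * Real.exp (-β * t / ε))) ≤
              C * (N : ℝ)⁻¹ * Real.log N := by
  refine ⟨2 + 2 * μ / β, by positivity, ?_⟩
  intro ε N hε _ hN heven σ x hσ hfine hcoarse k hk1 hkN
  have hlog : 1 ≤ log N := by
    rw [le_log_iff_exp_le (by positivity)]
    exact exp_one_lt_three.le.trans (by exact_mod_cast (by omega : 3 ≤ N))
  have hσ0 : 0 ≤ σ := hσ ▸ le_min (by norm_num) (by positivity)
  have hσ1 : σ ≤ 1 := hσ ▸ (min_le_left _ _).trans (by norm_num)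
  have hwidth : x k - x (k - 1) ≤ 2 * ((N : ℝ)⁻¹ * log N) :=
    (shishkin_sub_mem_Icc hfine hcoarse hσ0 hσ1 hk1 hkN).2.trans
      (by rw [div_eq_mul_inv]; gcongr; exact le_mul_of_one_le_right (by positivity) hlog)
  have hlayer := shishkin_layer_term_le hε hβ hμ hlog heven hσ hfine hcoarse hk1 hkN
  rw [integral_one_add_inv_mul_exp hε.ne' hβ.ne']
  linarith
end

section
/- Let V be a real Hilbert space, U a reflexive Banach space, A: U × V → ℝ a bounded bilinear form satisfying the inf-sup condition inf_{u≠0} sup_{v≠0} A(u,v)/(‖u‖_U ‖v‖_V) ≥ γ > 0, and define the trial-to-test operator Θ: U → V by ⟨Θu, v⟩_V = A(u, v) for all v ∈ V. Let U_h ⊆ U be a closed subspace, f ∈ V*, and suppose u ∈ U solves A(u, v) = f(v) for all v ∈ V while u_h ∈ U_h solves A(u_h, v_h) = f(v_h) for all v_h ∈ Θ(U_h). Then u_h is the best approximation of u from U_h in the energy norm ‖w‖_E := sup_{v≠0} A(w,v)/‖v‖_V, i.e. ‖u - u_h‖_E = inf_{w_h ∈ U_h} ‖u - w_h‖_E. 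-/
open Real NormedSpace

/-!
By the Riesz representation `⟪Θ w, v⟫ = A w v`, the energy norm of `w` is `‖Θ w‖`, and the
supremum defining it is attained at `v = Θ w`. The Petrov–Galerkin equations say that
`A (u - u_h) (Θ w_h) = 0`, i.e. `Θ (u - u_h)` is orthogonal to `Θ (U_h)`. Since `Θ` is linear,
`Θ (u - w_h) = Θ (u - u_h) + Θ (u_h - w_h)` is an orthogonal decomposition for `w_h ∈ U_h`, and
Pythagoras gives `‖Θ (u - u_h)‖ ≤ ‖Θ (u - w_h)‖`.
-/

section InnerProductSpace

variable {F : Type*} [NormedAddCommGroup F] [InnerProductSpace ℝ F]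

theorem isGreatest_range_inner_div_norm (x : F) :
    IsGreatest (Set.range fun v : F => inner ℝ x v / ‖v‖) ‖x‖ := by
  refine ⟨⟨x, ?_⟩, ?_⟩
  · simp only [real_inner_self_eq_norm_mul_norm, mul_self_div_self]
  · rintro _ ⟨v, rfl⟩
    exact div_le_of_le_mul₀ (norm_nonneg v) (norm_nonneg x) (real_inner_le_norm x v)

theorem iSup_inner_div_norm (x : F) : ⨆ v : F, inner ℝ x v / ‖v‖ = ‖x‖ :=
  (isGreatest_range_inner_div_norm x).csSup_eq

theorem norm_le_norm_add_of_inner_eq_zero {x y : F} (h : inner ℝ x y = 0) :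
    ‖x‖ ≤ ‖x + y‖ := by
  refine nonneg_le_nonneg_of_sq_le_sq (norm_nonneg _) ?_
  rw [norm_add_sq_eq_norm_sq_add_norm_sq_real h]
  exact le_add_of_nonneg_right (mul_self_nonneg _)

end InnerProductSpace

section TrialToTest

variable {U V : Type*} [NormedAddCommGroup U] [NormedSpace ℝ U]
  [NormedAddCommGroup V] [InnerProductSpace ℝ V]
  {A : U →L[ℝ] V →L[ℝ] ℝ} {Θ : U → V}

theorem trialToTest_sub (hΘ : ∀ u v, inner ℝ (Θ u) v = A u v) (u w : U) :
    Θ (u - w) = Θ u - Θ w :=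
  ext_inner_right ℝ fun v => by
    rw [inner_sub_left, hΘ, hΘ, hΘ, map_sub, sub_apply]

theorem iSup_div_norm_eq_norm_trialToTest (hΘ : ∀ u v, inner ℝ (Θ u) v = A u v) (w : U) :
    ⨆ v : V, A w v / ‖v‖ = ‖Θ w‖ := by
  simp_rw [← hΘ]
  exact iSup_inner_div_norm (Θ w)

theorem norm_trialToTest_sub_le_of_orthogonal (hΘ : ∀ u v, inner ℝ (Θ u) v = A u v)
    {Uh : Submodule ℝ U} {u uh wh : U} (horth : ∀ vh ∈ Uh, A (u - uh) (Θ vh) = 0)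
    (huh : uh ∈ Uh) (hwh : wh ∈ Uh) : ‖Θ (u - uh)‖ ≤ ‖Θ (u - wh)‖ := by
  have hsplit : Θ (u - wh) = Θ (u - uh) + Θ (uh - wh) := by
    simp only [trialToTest_sub hΘ, sub_add_sub_cancel]
  rw [hsplit]
  apply norm_le_norm_add_of_inner_eq_zero
  rw [hΘ]
  exact horth _ (Uh.sub_mem huh hwh)

end TrialToTest

theorem dPG_optimal_test_functions_best_approximation_general
    {U : Type*} [NormedAddCommGroup U] [NormedSpace ℝ U]
    {V : Type*} [NormedAddCommGroup V] [InnerProductSpace ℝ V]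
    (A : U →L[ℝ] V →L[ℝ] ℝ)
    (Θ : U → V) (hΘ : ∀ (u : U) (v : V), inner ℝ (Θ u) v = (A u v : ℝ))
    (Uh : Submodule ℝ U)
    (f : V →L[ℝ] ℝ)
    (u : U) (hu : ∀ v : V, A u v = f v)
    (uh : U) (huh : uh ∈ Uh)
    (hdisc : ∀ wh ∈ Uh, A uh (Θ wh) = f (Θ wh))
    (E : U → ℝ) (hE : ∀ w : U, E w = ⨆ v : V, A w v / ‖v‖) :
    E (u - uh) = ⨅ wh : Uh, E (u - wh) := by
  have horth : ∀ wh ∈ Uh, A (u - uh) (Θ wh) = 0 := fun wh hwh => by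
    rw [map_sub, sub_apply, hu, hdisc wh hwh, sub_self]
  simp only [hE, iSup_div_norm_eq_norm_trialToTest hΘ]
  have hleast : IsLeast (Set.range fun wh : Uh => ‖Θ (u - wh)‖) ‖Θ (u - uh)‖ := by
    refine ⟨⟨⟨uh, huh⟩, rfl⟩, ?_⟩
    rintro _ ⟨wh, rfl⟩
    exact norm_trialToTest_sub_le_of_orthogonal hΘ horth huh wh.2
  exact hleast.csInf_eq.symm

/-- Optimality of the ideal dPG method with optimal test functions: if the
trial-to-test operator `Θ` is defined by `⟪Θu, v⟫ = A(u,v)`, then the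
Petrov–Galerkin solution `u_h` with test space `Θ(U_h)` is the best
approximation of `u` from `U_h` in the energy norm
`‖w‖_E = sup_v A(w,v)/‖v‖_V`. -/
theorem dPG_optimal_test_functions_best_approximation
    {U : Type*} [NormedAddCommGroup U] [NormedSpace ℝ U] [CompleteSpace U]
    {V : Type*} [NormedAddCommGroup V] [InnerProductSpace ℝ V] [CompleteSpace V]
    (hrefl : Function.Surjective (inclusionInDoubleDual ℝ U))
    (A : U →L[ℝ] V →L[ℝ] ℝ) (γ : ℝ) (hγ : 0 < γ)
    (hinfsup : ∀ u : U, γ * ‖u‖ ≤ ⨆ v : V, A u v / ‖v‖)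
    (Θ : U → V) (hΘ : ∀ (u : U) (v : V), inner ℝ (Θ u) v = (A u v : ℝ))
    (Uh : Submodule ℝ U) (hUh : IsClosed (Uh : Set U))
    (f : V →L[ℝ] ℝ)
    (u : U) (hu : ∀ v : V, A u v = f v)
    (uh : U) (huh : uh ∈ Uh)
    (hdisc : ∀ wh ∈ Uh, A uh (Θ wh) = f (Θ wh))
    (E : U → ℝ) (hE : ∀ w : U, E w = ⨆ v : V, A w v / ‖v‖) :
    E (u - uh) = ⨅ wh : Uh, E (u - wh) :=
  dPG_optimal_test_functions_best_approximation_general A Θ hΘ Uh f u hu uh huh hdisc E hE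
end
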